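/- For r,s ≥ 3 both odd, any full row {u_i} × V(C_s) and any full column V(C_r) × {v_j} of the torus C_r □ C_s is a 2-antiresolving set; consequently adim_2(C_r □ C_s) ≤ min{r,s}. -/

import Mathlib

open SimpleGraph

/-- Two vertices have the same distances to every vertex of `S`. -/
def sameDists {V : Type*} (G : SimpleGraph V) (S : Set V) (x y : V) : Prop :=
  ∀ z ∈ S, G.dist x z = G.dist y z

/-- The equivalence class (outside `S`) of `x` under the equal-distance relation `R_S`. -/
def cls {V : Type*} (G : SimpleGraph V) (S : Set V) (x : V) : Set V :=
  {y | y ∉ S ∧ sameDists G S x y}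

/-- `S` is a `k`-antiresolving set: `S` is nonempty, does not cover `V`, and the minimum
size of an equivalence class of `R_S` on `V ∖ S` equals `k`. -/
def IsKARS {V : Type*} (G : SimpleGraph V) (k : ℕ) (S : Set V) : Prop :=
  S.Nonempty ∧ Sᶜ.Nonempty ∧
    (∀ x ∉ S, k ≤ (cls G S x).ncard) ∧ ∃ x ∉ S, (cls G S x).ncard = k

/-- The `k`-metric antidimension: the smallest cardinality of a `k`-antiresolving set,
`⊤` (i.e. `+∞`) if none exists. -/
noncomputable def adim {V : Type*} (G : SimpleGraph V) (k : ℕ) : ℕ∞ :=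
  sInf ((fun S => (S.ncard : ℕ∞)) '' {S : Set V | IsKARS G k S})

/-!
Distances in `C_r □ C_s` add coordinatewise. Seen from the row `{i} × C_s`, a vertex `(a, b)`
is at distance `d(a, i) + d(b, z)` from `(i, z)`; comparing `z = b` with `z = e` shows that a
vertex `(c, e)` with the same distance vector has `e = b` and `d(c, i) = d(a, i)`. On a cycle the
vertices at distance `d(a, i)` from `i` are `a` and its mirror image `2i - a`, and these differ
because `r` is odd. So every class of a row has exactly two elements; columns are symmetric, and
a row (column) has `s` (`r`) vertices.
-/

namespace Fin

variable {n : ℕ}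

lemma val_sub_add_val_cases (a b : Fin n) :
    (a - b).val + b.val = a.val ∨ (a - b).val + b.val = a.val + n := by
  rcases le_or_gt b a with h | h
  · exact .inl (by rw [sub_val_of_le h]; have := le_def.mp h; omega)
  · exact .inr (by rw [coe_sub_iff_lt.mpr h]; have := lt_def.mp h; omega)

lemma val_add_cases (a b : Fin n) :
    (a + b).val = a.val + b.val ∨ (a + b).val + n = a.val + b.val := by
  rw [val_add_eq_ite]
  split_ifs <;> omega

lemma ne_add_sub_of_odd (hn : Odd n) {i a : Fin n} (h : a ≠ i) : a ≠ i + i - a := by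
  obtain ⟨m, rfl⟩ := hn
  have := val_add_cases i i
  have := val_sub_add_val_cases (i + i) a
  simp only [ne_eq, Fin.ext_iff] at h ⊢
  omega

end Fin

section cycleGraph

variable {n : ℕ}

lemma cycleGraph_connected_of_neZero [NeZero n] : (cycleGraph n).Connected := by
  obtain ⟨m, rfl⟩ := Nat.exists_eq_succ_of_ne_zero (NeZero.ne n)
  exact cycleGraph_connected

lemma cycleGraph_dist_le_val_sub [NeZero n] (u v : Fin n) :
    (cycleGraph n).dist u v ≤ (v - u).val := by
  induction h : (v - u).val generalizing v with
  | zero => simp [sub_eq_zero.mp (Fin.ext h)]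
  | succ k ih =>
    have hone : (1 : Fin n).val = 1 := by
      rw [Fin.val_one', Nat.mod_eq_of_lt (by omega)]
    have hadj : (cycleGraph n).Adj (v - 1) v := by
      rw [cycleGraph_adj', sub_sub_cancel]
      exact .inr hone
    have hk : (v - 1 - u).val = k := by
      have := Fin.val_sub_add_val_cases (v - u) 1
      rw [sub_right_comm]
      omega
    have := ih (v - 1) hk
    rcases hadj.diff_dist_adj (u := u) with h | h | h <;> omega

lemma cycleGraph_min_val_sub_le_length {u v : Fin n} (p : (cycleGraph n).Walk u v) :
    min (v - u).val (u - v).val ≤ p.length := by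
  induction p with
  | @nil a =>
    have := Fin.val_sub_add_val_cases a a
    rw [Walk.length_nil]
    omega
  | @cons a b c hadj q ih =>
    rw [cycleGraph_adj'] at hadj
    have := Fin.val_sub_add_val_cases c a
    have := Fin.val_sub_add_val_cases a c
    have := Fin.val_sub_add_val_cases c b
    have := Fin.val_sub_add_val_cases b c
    have := Fin.val_sub_add_val_cases a b
    have := Fin.val_sub_add_val_cases b a
    rw [Walk.length_cons]
    omega

theorem cycleGraph_dist (u v : Fin n) :
    (cycleGraph n).dist u v = min (v - u).val (u - v).val := by
  have : NeZero n := NeZero.of_pos u.pos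
  obtain ⟨p, hp⟩ := (cycleGraph_preconnected u v).exists_walk_length_eq_dist
  refine le_antisymm (le_min (cycleGraph_dist_le_val_sub u v) ?_)
    (hp ▸ cycleGraph_min_val_sub_le_length p)
  exact dist_comm (G := cycleGraph n) ▸ cycleGraph_dist_le_val_sub v u

theorem cycleGraph_dist_eq_dist_iff {i a c : Fin n} :
    (cycleGraph n).dist c i = (cycleGraph n).dist a i ↔ c = a ∨ c = i + i - a := by
  rw [cycleGraph_dist, cycleGraph_dist, Fin.ext_iff, Fin.ext_iff]
  have := Fin.val_sub_add_val_cases i c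
  have := Fin.val_sub_add_val_cases c i
  have := Fin.val_sub_add_val_cases i a
  have := Fin.val_sub_add_val_cases a i
  have := Fin.val_add_cases i i
  have := Fin.val_sub_add_val_cases (i + i) a
  omega

lemma ncard_cycleGraph_sphere_of_odd (hn : Odd n) {i a : Fin n} (h : a ≠ i) :
    {c | (cycleGraph n).dist c i = (cycleGraph n).dist a i}.ncard = 2 := by
  simp only [cycleGraph_dist_eq_dist_iff]
  exact Set.ncard_pair (Fin.ne_add_sub_of_odd hn h)

end cycleGraph

namespace SimpleGraph

variable {α β : Type*} {G : SimpleGraph α} {H : SimpleGraph β}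

theorem Connected.dist_boxProd (hG : G.Connected) (hH : H.Connected) (x y : α × β) :
    (G □ H).dist x y = G.dist x.1 y.1 + H.dist x.2 y.2 := by
  have h := edist_boxProd (G := G) (H := H) x y
  rw [← (hG.preconnected x.1 y.1).coe_dist_eq_edist,
    ← (hH.preconnected x.2 y.2).coe_dist_eq_edist,
    ← ((hG.boxProd hH).preconnected x y).coe_dist_eq_edist] at h
  exact_mod_cast h

lemma Connected.eq_and_eq_of_forall_add_dist_eq (hH : H.Connected) {A C : ℕ} {b d : β}
    (h : ∀ z, A + H.dist b z = C + H.dist d z) : b = d ∧ A = C := by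
  have hb := h b
  have hd := h d
  rw [dist_self, dist_comm] at hb
  rw [dist_self] at hd
  have hbd : H.dist b d = 0 := by omega
  exact ⟨hH.dist_eq_zero_iff.mp hbd, by omega⟩

lemma cls_boxProd_row (hG : G.Connected) (hH : H.Connected) {i : α} {x : α × β}
    (hx : x.1 ≠ i) :
    cls (G □ H) {p | p.1 = i} x = {c | G.dist c i = G.dist x.1 i} ×ˢ {x.2} := by
  ext ⟨c, d⟩
  simp only [cls, sameDists, Set.mem_ofPred_eq, Set.mem_prod, Set.mem_singleton_iff,
    hG.dist_boxProd hH]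
  constructor
  · rintro ⟨-, hy⟩
    obtain ⟨hsnd, hdist⟩ := hH.eq_and_eq_of_forall_add_dist_eq (A := G.dist x.1 i)
      (C := G.dist c i) fun z => hy (i, z) rfl
    exact ⟨hdist.symm, hsnd.symm⟩
  · rintro ⟨hdist, rfl⟩
    refine ⟨fun hci => hx (hG.dist_eq_zero_iff.mp ?_), ?_⟩
    · rw [← hdist, hci, dist_self]
    · rintro z rfl
      rw [hdist]

lemma cls_boxProd_col (hG : G.Connected) (hH : H.Connected) {j : β} {x : α × β}
    (hx : x.2 ≠ j) :
    cls (G □ H) {p | p.2 = j} x = {x.1} ×ˢ {c | H.dist c j = H.dist x.2 j} := by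
  ext ⟨c, d⟩
  simp only [cls, sameDists, Set.mem_ofPred_eq, Set.mem_prod, Set.mem_singleton_iff,
    hG.dist_boxProd hH]
  constructor
  · rintro ⟨-, hy⟩
    obtain ⟨hfst, hdist⟩ := hG.eq_and_eq_of_forall_add_dist_eq (A := H.dist x.2 j)
      (C := H.dist d j) fun z => by rw [add_comm, hy (z, j) rfl, add_comm]
    exact ⟨hfst.symm, hdist.symm⟩
  · rintro ⟨rfl, hdist⟩
    refine ⟨fun hdj => hx (hH.dist_eq_zero_iff.mp ?_), ?_⟩
    · rw [← hdist, hdj, dist_self]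
    · rintro z rfl
      rw [hdist]

end SimpleGraph

lemma Set.ncard_setOf_fst_eq {α β : Type*} (i : α) :
    {p : α × β | p.1 = i}.ncard = Nat.card β := by
  rw [show {p : α × β | p.1 = i} = {i} ×ˢ Set.univ by ext; simp, Set.ncard_prod,
    Set.ncard_singleton, Set.ncard_univ, one_mul]

lemma Set.ncard_setOf_snd_eq {α β : Type*} (j : β) :
    {p : α × β | p.2 = j}.ncard = Nat.card α := by
  rw [show {p : α × β | p.2 = j} = Set.univ ×ˢ {j} by ext; simp, Set.ncard_prod,
    Set.ncard_singleton, Set.ncard_univ, mul_one]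

lemma IsKARS.of_forall_ncard_cls_eq {V : Type*} {G : SimpleGraph V} {k : ℕ} {S : Set V}
    (hS : S.Nonempty) {x : V} (hx : x ∉ S) (h : ∀ y ∉ S, (cls G S y).ncard = k) :
    IsKARS G k S :=
  ⟨hS, ⟨x, hx⟩, fun y hy => (h y hy).ge, x, hx, h x hx⟩

lemma IsKARS.adim_le {V : Type*} {G : SimpleGraph V} {k : ℕ} {S : Set V} (h : IsKARS G k S) :
    adim G k ≤ S.ncard :=
  sInf_le ⟨S, h, rfl⟩

section torus

variable {r s : ℕ}

lemma isKARS_torus_row (hr : Odd r) (hr1 : 1 < r) [NeZero s] (i : Fin r) :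
    IsKARS (cycleGraph r □ cycleGraph s) 2 {p | p.1 = i} := by
  have : NeZero r := ⟨by omega⟩
  have : Nontrivial (Fin r) := Fin.nontrivial_iff_two_le.mpr hr1
  obtain ⟨a, ha⟩ := exists_ne i
  refine .of_forall_ncard_cls_eq ⟨(i, 0), rfl⟩ (x := (a, 0)) ha fun x hx => ?_
  rw [cls_boxProd_row cycleGraph_connected_of_neZero cycleGraph_connected_of_neZero hx,
    Set.ncard_prod, ncard_cycleGraph_sphere_of_odd hr hx, Set.ncard_singleton]

lemma isKARS_torus_col (hs : Odd s) (hs1 : 1 < s) [NeZero r] (j : Fin s) :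
    IsKARS (cycleGraph r □ cycleGraph s) 2 {p | p.2 = j} := by
  have : NeZero s := ⟨by omega⟩
  have : Nontrivial (Fin s) := Fin.nontrivial_iff_two_le.mpr hs1
  obtain ⟨b, hb⟩ := exists_ne j
  refine .of_forall_ncard_cls_eq ⟨(0, j), rfl⟩ (x := (0, b)) hb fun x hx => ?_
  rw [cls_boxProd_col cycleGraph_connected_of_neZero cycleGraph_connected_of_neZero hx,
    Set.ncard_prod, ncard_cycleGraph_sphere_of_odd hs hx, Set.ncard_singleton]

end torus

/-- For odd `r, s ≥ 3`, every full row and every full column of the torus `C_r □ C_s`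
is a 2-ARS; consequently `adim_2(C_r □ C_s) ≤ min r s`. -/
theorem stmt5 (r s : ℕ) (hr : 3 ≤ r) (hs : 3 ≤ s) (hro : Odd r) (hso : Odd s) :
    (∀ i : Fin r,
      IsKARS ((cycleGraph r).boxProd (cycleGraph s)) 2 {p : Fin r × Fin s | p.1 = i}) ∧
    (∀ j : Fin s,
      IsKARS ((cycleGraph r).boxProd (cycleGraph s)) 2 {p : Fin r × Fin s | p.2 = j}) ∧
    adim ((cycleGraph r).boxProd (cycleGraph s)) 2 ≤ ((min r s : ℕ) : ℕ∞) := by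
  have : NeZero r := ⟨by omega⟩
  have : NeZero s := ⟨by omega⟩
  have row := isKARS_torus_row (s := s) hro (by omega)
  have col := isKARS_torus_col (r := r) hso (by omega)
  refine ⟨row, col, ?_⟩
  have hs' := (row 0).adim_le
  have hr' := (col 0).adim_le
  rw [Set.ncard_setOf_fst_eq, Nat.card_fin] at hs'
  rw [Set.ncard_setOf_snd_eq, Nat.card_fin] at hr'
  exact (le_min hr' hs').trans_eq Nat.mono_cast.map_min.symm
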